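/- arXiv:2212.14558 — 2 statements merged into one kernel-verified Lean document; each statement's English description precedes it below -/
import Mathlib

section
/- Fix matrices X₁ ∈ ℝ^{I×(K·J)}, B ∈ ℝ^{J×R}, C ∈ ℝ^{K×R}, and suppose the R×R matrix (C^T C) ∗ (B^T B) is invertible. Then A* = X₁(C⊙B)·((C^T C) ∗ (B^T B))^{-1} is the unique minimizer over ℝ^{I×R} of the function A ↦ ‖X₁ − A(C⊙B)^T‖_F². -/
open Matrix

attribute [local instance] Matrix.frobeniusNormedAddCommGroup Matrix.frobeniusNormedSpace

/-- The Khatri-Rao (column-wise Kronecker) product: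
`(khatriRao C B) ((k, j), r) = C k r * B j r`. -/
def khatriRao {K J R : Type*} (C : Matrix K R ℝ) (B : Matrix J R ℝ) :
    Matrix (K × J) R ℝ :=
  Matrix.of fun p r => C p.1 r * B p.2 r

lemma frob_sq {m n : Type*} [Fintype m] [Fintype n] (Y : Matrix m n ℝ) :
    ‖Y‖ ^ 2 = ∑ i, ∑ j, (Y i j) ^ 2 := by
  rw [Matrix.frobenius_norm_def, ← Real.rpow_natCast _ 2, ← Real.rpow_mul (by positivity),
    show ((1:ℝ)/2) * (2:ℕ) = 1 by norm_num, Real.rpow_one]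
  apply Finset.sum_congr rfl; intro i _
  apply Finset.sum_congr rfl; intro j _
  rw [Real.rpow_two, Real.norm_eq_abs, sq_abs]

lemma kr_gram {J K R : Type*} [Fintype J] [Fintype K]
    (C : Matrix K R ℝ) (B : Matrix J R ℝ) :
    (khatriRao C B)ᵀ * khatriRao C B = (Cᵀ * C) ⊙ (Bᵀ * B) := by
  ext r s
  simp only [Matrix.mul_apply, Matrix.hadamard_apply, Matrix.transpose_apply, khatriRao,
    Matrix.of_apply, Fintype.sum_prod_type, Finset.sum_mul, Finset.mul_sum]
  rw [Finset.sum_comm]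
  apply Finset.sum_congr rfl; intro k _
  apply Finset.sum_congr rfl; intro j _
  ring

/-- If `(CᵀC) ∗ (BᵀB)` is invertible, then `A* = X₁(C⊙B)((CᵀC) ∗ (BᵀB))⁻¹` is the unique
minimizer over `ℝ^{I×R}` of `A ↦ ‖X₁ − A(C⊙B)ᵀ‖_F²`. -/
theorem unique_minimizer_of_invertible_gram
    {I J K R : ℕ}
    (X₁ : Matrix (Fin I) (Fin K × Fin J) ℝ)
    (B : Matrix (Fin J) (Fin R) ℝ) (C : Matrix (Fin K) (Fin R) ℝ)
    (hinv : IsUnit ((Cᵀ * C) ⊙ (Bᵀ * B)))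
    (Astar : Matrix (Fin I) (Fin R) ℝ)
    (hAstar : Astar = X₁ * khatriRao C B * ((Cᵀ * C) ⊙ (Bᵀ * B))⁻¹) :
    (∀ A : Matrix (Fin I) (Fin R) ℝ,
        ‖X₁ - Astar * (khatriRao C B)ᵀ‖ ^ 2 ≤ ‖X₁ - A * (khatriRao C B)ᵀ‖ ^ 2) ∧
      ∀ A : Matrix (Fin I) (Fin R) ℝ,
        (∀ A' : Matrix (Fin I) (Fin R) ℝ,
          ‖X₁ - A * (khatriRao C B)ᵀ‖ ^ 2 ≤ ‖X₁ - A' * (khatriRao C B)ᵀ‖ ^ 2) →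
        A = Astar := by
  set M := khatriRao C B with hM
  set G := (Cᵀ * C) ⊙ (Bᵀ * B) with hG
  have hGram : Mᵀ * M = G := kr_gram C B
  have hGinv : G⁻¹ * G = 1 := Matrix.nonsing_inv_mul G (Matrix.isUnit_iff_isUnit_det G |>.mp hinv)
  -- normal equations
  have hnorm : (X₁ - Astar * Mᵀ) * M = 0 := by
    rw [hAstar, Matrix.sub_mul, Matrix.mul_assoc (X₁ * M * G⁻¹), hGram, Matrix.mul_assoc,
      hGinv, Matrix.mul_one, sub_self]
  -- key Pythagoras identity
  have key : ∀ A : Matrix (Fin I) (Fin R) ℝ,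
      ‖X₁ - A * Mᵀ‖ ^ 2 = ‖X₁ - Astar * Mᵀ‖ ^ 2 + ‖(Astar - A) * Mᵀ‖ ^ 2 := by
    intro A
    have hdec : X₁ - A * Mᵀ = (X₁ - Astar * Mᵀ) + (Astar - A) * Mᵀ := by
      rw [Matrix.sub_mul]; abel
    rw [hdec, frob_sq, frob_sq, frob_sq]
    have hcross : ∑ i, ∑ p, (X₁ - Astar * Mᵀ) i p * ((Astar - A) * Mᵀ) i p = 0 := by
      have : ∀ i, ∑ p, (X₁ - Astar * Mᵀ) i p * ((Astar - A) * Mᵀ) i p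
          = ∑ r, ((X₁ - Astar * Mᵀ) * M) i r * (Astar - A) i r := by
        intro i
        simp only [Matrix.mul_apply, Matrix.transpose_apply, Finset.sum_mul,
          Finset.mul_sum]
        rw [Finset.sum_comm]
        apply Finset.sum_congr rfl; intro r _
        apply Finset.sum_congr rfl; intro p _
        ring
      simp only [this, hnorm]
      simp
    calc ∑ i, ∑ p, ((X₁ - Astar * Mᵀ) + (Astar - A) * Mᵀ) i p ^ 2
        = (∑ i, ∑ p, (X₁ - Astar * Mᵀ) i p ^ 2) + (∑ i, ∑ p, ((Astar - A) * Mᵀ) i p ^ 2)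
          + 2 * ∑ i, ∑ p, (X₁ - Astar * Mᵀ) i p * ((Astar - A) * Mᵀ) i p := by
          simp only [Matrix.add_apply, ← Finset.sum_add_distrib, Finset.mul_sum]
          apply Finset.sum_congr rfl; intro i _
          apply Finset.sum_congr rfl; intro p _
          ring
      _ = _ := by rw [hcross]; ring
  constructor
  · intro A
    rw [key A]
    nlinarith [sq_nonneg ‖(Astar - A) * Mᵀ‖]
  · intro A hA
    have h1 := hA Astar
    rw [key A] at h1
    have h2 : ‖(Astar - A) * Mᵀ‖ ^ 2 ≤ 0 := by linarith
    have h3 : (Astar - A) * Mᵀ = 0 := by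
      have := sq_nonneg ‖(Astar - A) * Mᵀ‖
      have hz : ‖(Astar - A) * Mᵀ‖ = 0 := by nlinarith
      exact norm_eq_zero.mp hz
    have h4 : (Astar - A) * G = 0 := by
      rw [← hGram, ← Matrix.mul_assoc, h3, Matrix.zero_mul]
    have h5 : Astar - A = 0 := by
      have := congrArg (· * G⁻¹) h4
      simpa [Matrix.mul_assoc, Matrix.mul_nonsing_inv G
        (Matrix.isUnit_iff_isUnit_det G |>.mp hinv)] using this
    exact (sub_eq_zero.mp h5).symm
end

section
/- Let T ∈ ℝ^{I₁×I₂×I₃} be a third-order tensor and let U⁽¹⁾ ∈ ℝ^{I₁×R₁}, U⁽²⁾ ∈ ℝ^{I₂×R₂}, U⁽³⁾ ∈ ℝ^{I₃×R₃} be matrices with orthonormal columns (U⁽ⁱ⁾ᵀU⁽ⁱ⁾ = Identity). Set G = T ×₁ U⁽¹⁾ᵀ ×₂ U⁽²⁾ᵀ ×₃ U⁽³⁾ᵀ. Then ‖T − G ×₁ U⁽¹⁾ ×₂ U⁽²⁾ ×₃ U⁽³⁾‖_F² = ‖T‖_F² − ‖G‖_F². Consequently, minimizing ‖T − G ×₁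 U⁽¹⁾ ×₂ U⁽²⁾ ×₃ U⁽³⁾‖_F² over matrices U⁽¹⁾, U⁽²⁾, U⁽³⁾ with orthonormal columns is equivalent to maximizing ‖G‖_F² = ‖T ×₁ U⁽¹⁾ᵀ ×₂ U⁽²⁾ᵀ ×₃ U⁽³⁾ᵀ‖_F² over the same set. -/
open Matrix

/-- The multilinear (Tucker) product `H ×₁ U1 ×₂ U2 ×₃ U3` of a third-order tensor `H`
with matrices `U1, U2, U3` applied along the three modes. -/
def tuckerProd {I₁ I₂ I₃ R₁ R₂ R₃ : ℕ}
    (U1 : Matrix (Fin I₁) (Fin R₁) ℝ) (U2 : Matrix (Fin I₂) (Fin R₂) ℝ)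
    (U3 : Matrix (Fin I₃) (Fin R₃) ℝ)
    (H : Fin R₁ → Fin R₂ → Fin R₃ → ℝ) : Fin I₁ → Fin I₂ → Fin I₃ → ℝ :=
  fun i₁ i₂ i₃ => ∑ r₁, ∑ r₂, ∑ r₃, U1 i₁ r₁ * U2 i₂ r₂ * U3 i₃ r₃ * H r₁ r₂ r₃

/-- The core tensor `G = T ×₁ U1ᵀ ×₂ U2ᵀ ×₃ U3ᵀ`. -/
def coreTensor {I₁ I₂ I₃ R₁ R₂ R₃ : ℕ}
    (U1 : Matrix (Fin I₁) (Fin R₁) ℝ) (U2 : Matrix (Fin I₂) (Fin R₂) ℝ)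
    (U3 : Matrix (Fin I₃) (Fin R₃) ℝ)
    (T : Fin I₁ → Fin I₂ → Fin I₃ → ℝ) : Fin R₁ → Fin R₂ → Fin R₃ → ℝ :=
  fun r₁ r₂ r₃ => ∑ i₁, ∑ i₂, ∑ i₃, U1 i₁ r₁ * U2 i₂ r₂ * U3 i₃ r₃ * T i₁ i₂ i₃

/-- The squared Frobenius norm of the tuckerResidual
`‖T − G ×₁ U1 ×₂ U2 ×₃ U3‖_F²` where `G = T ×₁ U1ᵀ ×₂ U2ᵀ ×₃ U3ᵀ`. -/
def tuckerResidual {I₁ I₂ I₃ R₁ R₂ R₃ : ℕ}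
    (T : Fin I₁ → Fin I₂ → Fin I₃ → ℝ)
    (U1 : Matrix (Fin I₁) (Fin R₁) ℝ) (U2 : Matrix (Fin I₂) (Fin R₂) ℝ)
    (U3 : Matrix (Fin I₃) (Fin R₃) ℝ) : ℝ :=
  ∑ i₁, ∑ i₂, ∑ i₃,
    (T i₁ i₂ i₃ - tuckerProd U1 U2 U3 (coreTensor U1 U2 U3 T) i₁ i₂ i₃) ^ 2

/-- The squared Frobenius norm `‖G‖_F²` of the core tensor. -/
def coreNormSq {I₁ I₂ I₃ R₁ R₂ R₃ : ℕ}
    (T : Fin I₁ → Fin I₂ → Fin I₃ → ℝ)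
    (U1 : Matrix (Fin I₁) (Fin R₁) ℝ) (U2 : Matrix (Fin I₂) (Fin R₂) ℝ)
    (U3 : Matrix (Fin I₃) (Fin R₃) ℝ) : ℝ :=
  ∑ r₁, ∑ r₂, ∑ r₃, (coreTensor U1 U2 U3 T r₁ r₂ r₃) ^ 2

lemma sum_swap_three {α δ ε ζ : Type*} [Fintype α] [Fintype δ] [Fintype ε] [Fintype ζ]
    (f : α → δ → ε → ζ → ℝ) :
    ∑ a, ∑ d, ∑ e, ∑ g, f a d e g = ∑ d, ∑ e, ∑ g, ∑ a, f a d e g := by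
  rw [Finset.sum_comm]
  refine Finset.sum_congr rfl fun d _ => ?_
  rw [Finset.sum_comm]
  refine Finset.sum_congr rfl fun e _ => ?_
  rw [Finset.sum_comm]

lemma sum_swap33 {α β γ δ ε ζ : Type*} [Fintype α] [Fintype β] [Fintype γ]
    [Fintype δ] [Fintype ε] [Fintype ζ]
    (f : α → β → γ → δ → ε → ζ → ℝ) :
    ∑ a, ∑ b, ∑ c, ∑ d, ∑ e, ∑ g, f a b c d e g
      = ∑ d, ∑ e, ∑ g, ∑ a, ∑ b, ∑ c, f a b c d e g := by
  have h1 : ∀ a, ∑ b, ∑ c, ∑ d, ∑ e, ∑ g, f a b c d e g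
      = ∑ d, ∑ e, ∑ g, ∑ b, ∑ c, f a b c d e g := by
    intro a
    have h0 : ∀ b, ∑ c, ∑ d, ∑ e, ∑ g, f a b c d e g
        = ∑ d, ∑ e, ∑ g, ∑ c, f a b c d e g := fun b => sum_swap_three _
    simp only [h0]
    exact sum_swap_three _
  simp only [h1]
  exact sum_swap_three _

lemma sum_rev3 {α β γ : Type*} [Fintype α] [Fintype β] [Fintype γ] (f : α → β → γ → ℝ) :
    ∑ a, ∑ b, ∑ c, f a b c = ∑ c, ∑ b, ∑ a, f a b c := by
  have h1 : ∀ a : α, ∑ b, ∑ c, f a b c = ∑ c, ∑ b, f a b c := fun a => Finset.sum_comm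
  simp only [h1]
  rw [Finset.sum_comm]
  exact Finset.sum_congr rfl fun c _ => Finset.sum_comm

lemma tucker_adjoint {I₁ I₂ I₃ R₁ R₂ R₃ : ℕ}
    (U1 : Matrix (Fin I₁) (Fin R₁) ℝ) (U2 : Matrix (Fin I₂) (Fin R₂) ℝ)
    (U3 : Matrix (Fin I₃) (Fin R₃) ℝ)
    (A : Fin I₁ → Fin I₂ → Fin I₃ → ℝ) (G : Fin R₁ → Fin R₂ → Fin R₃ → ℝ) :
    ∑ i₁, ∑ i₂, ∑ i₃, A i₁ i₂ i₃ * tuckerProd U1 U2 U3 G i₁ i₂ i₃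
      = ∑ r₁, ∑ r₂, ∑ r₃, coreTensor U1 U2 U3 A r₁ r₂ r₃ * G r₁ r₂ r₃ := by
  simp only [tuckerProd, coreTensor, Finset.mul_sum, Finset.sum_mul]
  rw [sum_swap33]
  refine Finset.sum_congr rfl fun r₁ _ => Finset.sum_congr rfl fun r₂ _ =>
    Finset.sum_congr rfl fun r₃ _ => Finset.sum_congr rfl fun i₁ _ =>
    Finset.sum_congr rfl fun i₂ _ => Finset.sum_congr rfl fun i₃ _ => by ring

lemma core_tucker {I₁ I₂ I₃ R₁ R₂ R₃ : ℕ}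
    (U1 : Matrix (Fin I₁) (Fin R₁) ℝ) (U2 : Matrix (Fin I₂) (Fin R₂) ℝ)
    (U3 : Matrix (Fin I₃) (Fin R₃) ℝ)
    (hU1 : U1ᵀ * U1 = 1) (hU2 : U2ᵀ * U2 = 1) (hU3 : U3ᵀ * U3 = 1)
    (G : Fin R₁ → Fin R₂ → Fin R₃ → ℝ) :
    coreTensor U1 U2 U3 (tuckerProd U1 U2 U3 G) = G := by
  funext r₁ r₂ r₃
  have key : ∀ (s₁ : Fin R₁) (s₂ : Fin R₂) (s₃ : Fin R₃),
      ∑ i₁, ∑ i₂, ∑ i₃, U1 i₁ r₁ * U2 i₂ r₂ * U3 i₃ r₃ *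
        (U1 i₁ s₁ * U2 i₂ s₂ * U3 i₃ s₃ * G s₁ s₂ s₃)
      = (U1ᵀ * U1) r₁ s₁ * (U2ᵀ * U2) r₂ s₂ * (U3ᵀ * U3) r₃ s₃ * G s₁ s₂ s₃ := by
    intro s₁ s₂ s₃
    simp only [Matrix.mul_apply, Matrix.transpose_apply, Finset.sum_mul, Finset.mul_sum]
    rw [sum_rev3]
    refine Finset.sum_congr rfl fun i₃ _ => Finset.sum_congr rfl fun i₂ _ =>
      Finset.sum_congr rfl fun i₁ _ => by ring
  calc coreTensor U1 U2 U3 (tuckerProd U1 U2 U3 G) r₁ r₂ r₃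
      = ∑ s₁, ∑ s₂, ∑ s₃, ∑ i₁, ∑ i₂, ∑ i₃,
          U1 i₁ r₁ * U2 i₂ r₂ * U3 i₃ r₃ *
            (U1 i₁ s₁ * U2 i₂ s₂ * U3 i₃ s₃ * G s₁ s₂ s₃) := by
        simp only [coreTensor, tuckerProd, Finset.mul_sum]
        rw [sum_swap33]
    _ = ∑ s₁, ∑ s₂, ∑ s₃,
          (U1ᵀ * U1) r₁ s₁ * (U2ᵀ * U2) r₂ s₂ * (U3ᵀ * U3) r₃ s₃ * G s₁ s₂ s₃ := by
        simp only [key]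
    _ = G r₁ r₂ r₃ := by
        simp [hU1, hU2, hU3, Matrix.one_apply, Finset.sum_ite_eq, Finset.mul_sum]

lemma residual_key {I₁ I₂ I₃ R₁ R₂ R₃ : ℕ}
    (T : Fin I₁ → Fin I₂ → Fin I₃ → ℝ)
    (U1 : Matrix (Fin I₁) (Fin R₁) ℝ) (U2 : Matrix (Fin I₂) (Fin R₂) ℝ)
    (U3 : Matrix (Fin I₃) (Fin R₃) ℝ)
    (hU1 : U1ᵀ * U1 = 1) (hU2 : U2ᵀ * U2 = 1) (hU3 : U3ᵀ * U3 = 1) :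
    tuckerResidual T U1 U2 U3
      = (∑ i₁, ∑ i₂, ∑ i₃, (T i₁ i₂ i₃) ^ 2) - coreNormSq T U1 U2 U3 := by
  set G := coreTensor U1 U2 U3 T with hG
  set P := tuckerProd U1 U2 U3 G with hP
  have hc := tucker_adjoint U1 U2 U3 T G
  have hp := tucker_adjoint U1 U2 U3 P G
  rw [hP, core_tucker U1 U2 U3 hU1 hU2 hU3] at hp
  unfold tuckerResidual coreNormSq
  simp only [← hG, ← hP]
  have e : ∀ a b : ℝ, (a - b) ^ 2 = a ^ 2 - a * b - (a * b - b * b) := by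
    intro a b; ring
  simp only [e, Finset.sum_sub_distrib]
  rw [hc, hp]
  have : ∑ r₁, ∑ r₂, ∑ r₃, G r₁ r₂ r₃ * G r₁ r₂ r₃
      = ∑ r₁, ∑ r₂, ∑ r₃, (G r₁ r₂ r₃) ^ 2 := by
    simp [sq]
  rw [this]
  ring

/-- For `U1, U2, U3` with orthonormal columns and `G = T ×₁ U1ᵀ ×₂ U2ᵀ ×₃ U3ᵀ`,
`‖T − G ×₁ U1 ×₂ U2 ×₃ U3‖_F² = ‖T‖_F² − ‖G‖_F²`.  Consequently, for two triples of
matrices with orthonormal columns, the tuckerResidual of the first is at most the tuckerResidual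
of the second iff the core norm of the second is at most that of the first: i.e.
minimizing the tuckerResidual is equivalent to maximizing `‖G‖_F²`. -/
theorem residual_eq_normSq_sub_coreNormSq_and_min_iff_max
    {I₁ I₂ I₃ R₁ R₂ R₃ : ℕ}
    (T : Fin I₁ → Fin I₂ → Fin I₃ → ℝ)
    (U1 : Matrix (Fin I₁) (Fin R₁) ℝ) (U2 : Matrix (Fin I₂) (Fin R₂) ℝ)
    (U3 : Matrix (Fin I₃) (Fin R₃) ℝ)
    (hU1 : U1ᵀ * U1 = 1) (hU2 : U2ᵀ * U2 = 1) (hU3 : U3ᵀ * U3 = 1)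
    (V1 : Matrix (Fin I₁) (Fin R₁) ℝ) (V2 : Matrix (Fin I₂) (Fin R₂) ℝ)
    (V3 : Matrix (Fin I₃) (Fin R₃) ℝ)
    (hV1 : V1ᵀ * V1 = 1) (hV2 : V2ᵀ * V2 = 1) (hV3 : V3ᵀ * V3 = 1) :
    tuckerResidual T U1 U2 U3 = (∑ i₁, ∑ i₂, ∑ i₃, (T i₁ i₂ i₃) ^ 2) - coreNormSq T U1 U2 U3 ∧
      (tuckerResidual T U1 U2 U3 ≤ tuckerResidual T V1 V2 V3 ↔
        coreNormSq T V1 V2 V3 ≤ coreNormSq T U1 U2 U3) := by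
  constructor
  · exact residual_key T U1 U2 U3 hU1 hU2 hU3
  · have h1 := residual_key T U1 U2 U3 hU1 hU2 hU3
    have h2 := residual_key T V1 V2 V3 hV1 hV2 hV3
    constructor <;> intro h <;> linarith
end
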